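/- Complementary dGL equivalence for Angel: For every hybrid game α and every set of states X ⊆ S, the semi-competitive winning region with complementary goals coincides with the zero-sum dGL winning region: ς_α(X, Xᶜ) = ς_α(X). -/
import Mathlib


open Set

/-- Hybrid games over a variable set `V`. Terms/ODE right-hand sides are
interpreted as functions from states `V → ℝ` to `ℝ`; tests and evolution
domain constraints are sets of states. -/
inductive Game (V : Type*) where
  | assign (x : V) (e : (V → ℝ) → ℝ)
  | ode (x : V) (f : (V → ℝ) → ℝ) (Q : Set (V → ℝ))
  | test (Q : Set (V → ℝ))
  | choice (a b : Game V)
  | seq (a b : Game V)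
  | dual (a : Game V)
  | star (a : Game V)

variable {V : Type*} [DecidableEq V]

/-- `φ : ℝ → (V → ℝ)` (restricted to `[0,r]`) is a solution of `x' = f(x) & Q`
of duration `r ≥ 0`: `t ↦ φ t x` is differentiable with derivative `f (φ s)`
at each `s ∈ [0,r]`, `φ s ∈ Q` on `[0,r]`, and all other variables stay
constant along `φ`. -/
def IsSolution (x : V) (f : (V → ℝ) → ℝ) (Q : Set (V → ℝ)) (r : ℝ)
    (φ : ℝ → (V → ℝ)) : Prop :=
  0 ≤ r ∧
  (∀ s ∈ Set.Icc 0 r, HasDerivAt (fun t => φ t x) (f (φ s)) s) ∧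
  (∀ s ∈ Set.Icc 0 r, φ s ∈ Q) ∧
  (∀ s ∈ Set.Icc 0 r, ∀ y, y ≠ x → φ s y = φ 0 y)

mutual
/-- Angel's semi-competitive winning region ς_α(X,Y). -/
def angel : Game V → Set (V → ℝ) → Set (V → ℝ) → Set (V → ℝ)
  | .assign x e, X, _ => {ω | Function.update ω x (e ω) ∈ X}
  | .ode x f Q, X, _ =>
      {ω | ∃ r φ, IsSolution x f Q r φ ∧ φ 0 = ω ∧ φ r ∈ X}
  | .test Q, X, _ => Q ∩ X
  | .choice a b, X, Y => angel a X Y ∪ angel b X Y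
  | .seq a b, X, Y => angel a (angel b X Y) (demon b X Y)
  | .dual a, X, Y => demon a Y X
  | .star a, X, Y =>
      ⋂₀ {Z | X ∪ angel a Z Zᶜ ⊆ Z} ∪
      ⋂₀ {Z | (X ∩ Y) ∪ (angel a Z Z ∩ demon a Z Z) ⊆ Z}

/-- Demon's semi-competitive winning region δ_α(X,Y). -/
def demon : Game V → Set (V → ℝ) → Set (V → ℝ) → Set (V → ℝ)
  | .assign x e, _, Y => {ω | Function.update ω x (e ω) ∈ Y}
  | .ode x f Q, X, Y =>
      {ω | ∀ r φ, IsSolution x f Q r φ → φ 0 = ω → ∀ s ∈ Set.Icc 0 r, φ s ∈ Y} ∪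
      {ω | ∃ r φ, IsSolution x f Q r φ ∧ φ 0 = ω ∧ ∃ s ∈ Set.Icc 0 r, φ s ∈ X ∩ Y}
  | .test Q, _, Y => Qᶜ ∪ Y
  | .choice a b, X, Y =>
      (demon a X Y ∩ demon b X Y) ∪ (demon a X Y ∩ angel a X Y) ∪
      (demon b X Y ∩ angel b X Y)
  | .seq a b, X, Y => demon a (angel b X Y) (demon b X Y)
  | .dual a, X, Y => angel a Y X
  | .star a, X, Y =>
      ⋃₀ {Z | Z ⊆ Y ∩ demon a Zᶜ Z} ∪
      ⋂₀ {Z | (X ∩ Y) ∪ (angel a Z Z ∩ demon a Z Z) ⊆ Z}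
end

/-- Angel's one-argument zero-sum dGL winning region ς_α(X). -/
def dglAngel : Game V → Set (V → ℝ) → Set (V → ℝ)
  | .assign x e, X => {ω | Function.update ω x (e ω) ∈ X}
  | .ode x f Q, X => {ω | ∃ r φ, IsSolution x f Q r φ ∧ φ 0 = ω ∧ φ r ∈ X}
  | .test Q, X => Q ∩ X
  | .choice a b, X => dglAngel a X ∪ dglAngel b X
  | .seq a b, X => dglAngel a (dglAngel b X)
  | .dual a, X => (dglAngel a Xᶜ)ᶜ
  | .star a, X => ⋂₀ {Z | X ∪ dglAngel a Z ⊆ Z}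

/-- Demon's one-argument zero-sum dGL winning region δ_α(X) = (ς_α(Xᶜ))ᶜ. -/
def dglDemon (g : Game V) (X : Set (V → ℝ)) : Set (V → ℝ) :=
  (dglAngel g Xᶜ)ᶜ

/-- Systematization α^{-d}: removes all dual operators. -/
def Game.sys : Game V → Game V
  | .assign x e => .assign x e
  | .ode x f Q => .ode x f Q
  | .test Q => .test Q
  | .choice a b => .choice a.sys b.sys
  | .seq a b => .seq a.sys b.sys
  | .dual a => a.sys
  | .star a => .star a.sys

lemma sol_restrict {x : V} {f : (V → ℝ) → ℝ} {Q : Set (V → ℝ)} {r s : ℝ} {φ : ℝ → V → ℝ}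
    (h : IsSolution x f Q r φ) (hs : s ∈ Set.Icc 0 r) : IsSolution x f Q s φ := by
  obtain ⟨hr, hd, hQ, hc⟩ := h
  exact ⟨hs.1, fun t ht => hd t ⟨ht.1, ht.2.trans hs.2⟩,
    fun t ht => hQ t ⟨ht.1, ht.2.trans hs.2⟩,
    fun t ht => hc t ⟨ht.1, ht.2.trans hs.2⟩⟩

lemma angel_demon_disj (a : Game V) : ∀ (X Y : Set (V → ℝ)),
    (∀ ω, ω ∈ X → ω ∈ Y → False) →
    ∀ ω, ω ∈ angel a X Y → ω ∈ demon a X Y → False := by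
  induction a with
  | assign x e =>
    intro X Y h ω hA hD
    exact h _ hA hD
  | ode x f Q =>
    intro X Y h ω hA hD
    obtain ⟨r, φ, hs, h0, hr⟩ := hA
    rcases hD with hD | ⟨r', φ', hs', h0', s, hsI, hmem⟩
    · exact h _ hr (hD r φ hs h0 r ⟨hs.1, le_refl r⟩)
    · exact h _ hmem.1 hmem.2
  | test Q =>
    intro X Y h ω hA hD
    rcases hD with hD | hD
    · exact hD hA.1
    · exact h _ hA.2 hD
  | choice a b iha ihb =>
    intro X Y h ω hA hD
    rcases hD with (⟨hDa, hDb⟩ | ⟨hDa, hAa⟩) | ⟨hDb, hAb⟩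
    · rcases hA with hAa | hAb
      · exact iha X Y h ω hAa hDa
      · exact ihb X Y h ω hAb hDb
    · exact iha X Y h ω hAa hDa
    · exact ihb X Y h ω hAb hDb
  | seq a b iha ihb =>
    intro X Y h ω hA hD
    exact iha _ _ (ihb X Y h) ω hA hD
  | dual a iha =>
    intro X Y h ω hA hD
    exact iha Y X (fun ω hy hx => h ω hx hy) ω hD hA
  | star a iha =>
    intro X Y h ω hA hD
    have hT : (∅ : Set (V → ℝ)) ∈
        {Z | (X ∩ Y) ∪ (angel a Z Z ∩ demon a Z Z) ⊆ Z} := by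
      intro z hz
      rcases hz with ⟨hx, hy⟩ | ⟨hz1, hz2⟩
      · exact h z hx hy
      · exact (iha ∅ ∅ (fun _ h _ => h) z hz1 hz2).elim
    rcases hA with hA | hA
    · rcases hD with hD | hD
      · obtain ⟨Z₀, hZ₀, hωZ⟩ := hD
        have hmem : Z₀ᶜ ∈ {Z | X ∪ angel a Z Zᶜ ⊆ Z} := by
          intro z hz hzZ
          rcases hz with hzX | hzA
          · exact h z hzX ((hZ₀ hzZ).1)
          · rw [compl_compl] at hzA
            exact iha Z₀ᶜ Z₀ (fun _ hc hz => hc hz) z hzA ((hZ₀ hzZ).2)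
        exact hA Z₀ᶜ hmem hωZ
      · exact hD ∅ hT
    · exact hA ∅ hT

lemma angel_demon_dgl (a : Game V) : ∀ X : Set (V → ℝ),
    angel a X Xᶜ = dglAngel a X ∧ demon a X Xᶜ = (dglAngel a X)ᶜ := by
  induction a with
  | assign x e => exact fun X => ⟨rfl, rfl⟩
  | ode x f Q =>
    intro X
    refine ⟨rfl, ?_⟩
    ext ω
    simp only [demon, dglAngel, Set.mem_union, Set.mem_setOf_eq, Set.mem_compl_iff,
      Set.mem_inter_iff]
    constructor
    · rintro (h | ⟨r, φ, hs, h0, s, hsI, hm1, hm2⟩)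
      · rintro ⟨r, φ, hs, h0, hr⟩
        exact h r φ hs h0 r ⟨hs.1, le_refl r⟩ hr
      · exact (hm2 hm1).elim
    · intro h
      left
      intro r φ hs h0 s hsI hX
      exact h ⟨s, φ, sol_restrict hs hsI, h0, hX⟩
  | test Q =>
    intro X
    refine ⟨rfl, ?_⟩
    simp only [demon, dglAngel, Set.compl_inter]
  | choice a b iha ihb =>
    intro X
    constructor
    · simp only [angel, dglAngel, (iha X).1, (ihb X).1]
    · simp only [demon, dglAngel, (iha X).1, (ihb X).1, (iha X).2, (ihb X).2]
      simp [Set.compl_union, Set.compl_inter_self]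
  | seq a b iha ihb =>
    intro X
    have hb := ihb X
    have ha := iha (dglAngel b X)
    constructor
    · simp only [angel, dglAngel, hb.1, hb.2, ha.1]
    · simp only [demon, dglAngel, hb.1, hb.2, ha.2]
  | dual a iha =>
    intro X
    have ha := iha Xᶜ
    constructor
    · simp only [angel, dglAngel]
      rw [show demon a Xᶜ X = demon a Xᶜ (Xᶜ)ᶜ by rw [compl_compl], ha.2]
    · simp only [demon, dglAngel]
      rw [show angel a Xᶜ X = angel a Xᶜ (Xᶜ)ᶜ by rw [compl_compl], ha.1, compl_compl]
  | star a iha =>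
    intro X
    have hT : ⋂₀ {Z : Set (V → ℝ) | (X ∩ Xᶜ) ∪ (angel a Z Z ∩ demon a Z Z) ⊆ Z}
        = ∅ := by
      apply Set.eq_empty_of_subset_empty
      apply Set.sInter_subset_of_mem
      intro z hz
      rcases hz with ⟨hx, hy⟩ | ⟨hz1, hz2⟩
      · exact hy hx
      · exact (angel_demon_disj a ∅ ∅ (fun _ h _ => h) z hz1 hz2).elim
    have hS : {Z : Set (V → ℝ) | X ∪ angel a Z Zᶜ ⊆ Z}
        = {Z | X ∪ dglAngel a Z ⊆ Z} := by
      ext Z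
      rw [Set.mem_setOf_eq, Set.mem_setOf_eq, (iha Z).1]
    constructor
    · simp only [angel, dglAngel]
      rw [hT, Set.union_empty, hS]
    · simp only [demon, dglAngel]
      rw [hT, Set.union_empty]
      ext ω
      simp only [Set.mem_sUnion, Set.mem_setOf_eq, Set.mem_compl_iff, Set.mem_sInter]
      constructor
      · rintro ⟨Z₀, hZ₀, hω⟩ hall
        have hmem : X ∪ dglAngel a Z₀ᶜ ⊆ Z₀ᶜ := by
          intro z hz hzZ
          rcases hz with hzX | hzA
          · exact (hZ₀ hzZ).1 hzX
          · rw [← (iha Z₀ᶜ).1, compl_compl] at hzA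
            exact angel_demon_disj a Z₀ᶜ Z₀ (fun _ hc hz => hc hz) z hzA ((hZ₀ hzZ).2)
        exact hall Z₀ᶜ hmem hω
      · intro h
        push_neg at h
        obtain ⟨W, hW, hω⟩ := h
        refine ⟨Wᶜ, ?_, hω⟩
        rw [compl_compl, (iha W).2]
        intro z hz
        exact ⟨fun hX => hz (hW (Or.inl hX)), fun hA => hz (hW (Or.inr hA))⟩
/-- Complementary dGL equivalence for Angel:
`ς_α(X, Xᶜ) = ς_α(X)`. -/
theorem complementary_dGL_equivalence_angel (α : Game V) (X : Set (V → ℝ)) :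
    angel α X Xᶜ = dglAngel α X := by
  exact (angel_demon_dgl α X).1
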